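/- Let G be a tree on vertex set V rooted at r with |V| ≥ 3, and let OPT be a set of links such that (V, E(G) ∪ OPT) is 2-vertex-connected. Fix a vertex a ∈ V and let E*(a) = {{u,v} ∈ OPT : LCA(u,v) = a}. Consider the auxiliary graph whose nodes are the bad children of a, each representing its subtree G_v, together with (if a has at least one good child) one extra node representing the union of the subtrees of all good children of a, where two nodes are joined by an edge whenever E*(a) contains a link with one endpoint in the vertex set represented by one node and its other endpoint in the vertex set represented by the other node. Then this auxiliary graph is connected; in particular, E*(a) contains a spanning tree of it. -/

import Mathlib

open SimpleGraph

/-- A graph (on at least 3 vertices) is 2-vertex-connected if it is connected and the deletion of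
any single vertex leaves it connected. -/
def TwoVertexConnected {V : Type*} (H : SimpleGraph V) : Prop :=
  H.Connected ∧ ∀ a : V, (H.induce ({a}ᶜ : Set V)).Connected

/-- In a tree `G` rooted at `r`, the vertex `a` lies on the (unique) path from `r` to `v`;
equivalently, `v` belongs to the subtree `G_a` rooted at `a`. -/
def OnRootPath {V : Type*} (G : SimpleGraph V) (r a v : V) : Prop :=
  ∀ p : G.Walk r v, p.IsPath → a ∈ p.support

/-- The vertex set `G_a` of the subtree rooted at `a` (in the tree `G` rooted at `r`). -/
def subtreeSet {V : Type*} (G : SimpleGraph V) (r a : V) : Set V :=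
  {v | OnRootPath G r a v}

/-- `v` is a child of `a` in the tree `G` rooted at `r`. -/
def IsChild {V : Type*} (G : SimpleGraph V) (r a v : V) : Prop :=
  G.Adj a v ∧ OnRootPath G r a v

/-- `a` is the lowest common ancestor of `u` and `v` in the tree `G` rooted at `r`: it lies on
both root paths, and every vertex lying on both root paths is an ancestor of `a`. -/
def IsLCA {V : Type*} (G : SimpleGraph V) (r a u v : V) : Prop :=
  OnRootPath G r a u ∧ OnRootPath G r a v ∧
    ∀ b : V, OnRootPath G r b u → OnRootPath G r b v → OnRootPath G r b a

/-- A child `v` of `a` is good (w.r.t. the link set `L`): `L` contains a link with one endpoint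
in `G_v` and the other endpoint in `V ∖ G_a`. -/
def IsGoodChild {V : Type*} (G : SimpleGraph V) (r : V) (L : Set (Sym2 V)) (a v : V) : Prop :=
  IsChild G r a v ∧ ∃ x ∈ subtreeSet G r v, ∃ y ∈ (subtreeSet G r a)ᶜ, s(x, y) ∈ L

/-- The node set of the auxiliary graph at `a`: one node (a vertex set) for the subtree of each
bad child of `a`, plus — if `a` has at least one good child — one extra node which is the union
of the subtrees of all good children of `a`. -/
def auxParts {V : Type*} (G : SimpleGraph V) (r : V) (L : Set (Sym2 V)) (a : V) :
    Set (Set V) :=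
  {S | ∃ v : V, IsChild G r a v ∧ ¬ IsGoodChild G r L a v ∧ S = subtreeSet G r v} ∪
    {S | (∃ v : V, IsGoodChild G r L a v) ∧
      S = ⋃ v ∈ {v : V | IsGoodChild G r L a v}, subtreeSet G r v}

/-- Two nodes of the auxiliary graph are adjacent (w.r.t. a link set `L`) when they are distinct
members of `P` and `L` contains a link with one endpoint in each of the two vertex sets. -/
def auxAdj {V : Type*} (L : Set (Sym2 V)) (P : Set (Set V)) (A B : Set V) : Prop :=
  A ∈ P ∧ B ∈ P ∧ A ≠ B ∧ ∃ x ∈ A, ∃ y ∈ B, s(x, y) ∈ L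

/-- The auxiliary graph with node set `P` and `L`-adjacency is connected. -/
def auxConnected {V : Type*} (L : Set (Sym2 V)) (P : Set (Set V)) : Prop :=
  ∀ A ∈ P, ∀ B ∈ P, Relation.ReflTransGen (auxAdj L P) A B

/-- The links of `OPT` whose endpoints have lowest common ancestor `a`. -/
def lcaLinks {V : Type*} (G : SimpleGraph V) (r : V) (OPT : Set (Sym2 V)) (a : V) :
    Set (Sym2 V) :=
  {e ∈ OPT | ∃ u v : V, e = s(u, v) ∧ IsLCA G r a u v}

/-!
Delete the vertex `a`: by 2-vertex-connectivity the rest of the augmented graph is still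
connected. Send every vertex `x ≠ a` to the node of the auxiliary graph containing it. A tree edge
never leaves the subtree of a child of `a` except towards `a`, and a link leaving the subtree of a
bad child stays inside `G_a`, so it enters the subtree of another child and has lowest common
ancestor `a`. Hence the image of a path avoiding `a` is a walk in the auxiliary graph that uses
only links of `E*(a)`.
-/

theorem OnRootPath.trans {V : Type*} {G : SimpleGraph V} {r a v x : V}
    (hv : OnRootPath G r a v) (hx : OnRootPath G r v x) : OnRootPath G r a x := by
  classical
  intro p hp
  exact p.support_takeUntil_subset_support (hx p hp) (hv _ (hp.takeUntil _))

theorem mem_subtreeSet_self {V : Type*} (G : SimpleGraph V) (r v : V) : v ∈ subtreeSet G r v :=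
  fun p _ => p.end_mem_support

namespace SimpleGraph.IsTree

variable {V : Type*} {G : SimpleGraph V}

noncomputable def rootPath (hG : G.IsTree) (r x : V) : G.Walk r x :=
  (hG.existsUnique_path r x).exists.choose

/-- The vertices of the root path of `x`, listed from `r` down to `x`; subtree membership and
the parent-child relation become prefix relations between these lists. -/
noncomputable def ancestors (hG : G.IsTree) (r x : V) : List V :=
  (hG.rootPath r x).support

variable {r a b c v w x y : V}

section

variable (hG : G.IsTree)

theorem isPath_rootPath (r x : V) : (hG.rootPath r x).IsPath :=
  (hG.existsUnique_path r x).exists.choose_spec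

theorem eq_rootPath {p : G.Walk r x} (hp : p.IsPath) : p = hG.rootPath r x :=
  (hG.existsUnique_path r x).unique hp (hG.isPath_rootPath r x)

theorem onRootPath_iff : OnRootPath G r a x ↔ a ∈ hG.ancestors r x :=
  ⟨fun h => h _ (hG.isPath_rootPath r x), fun h _ hp => hG.eq_rootPath hp ▸ h⟩

theorem getLast?_ancestors : (hG.ancestors r x).getLast? = some x := by
  rw [ancestors, List.getLast?_eq_some_getLast (Walk.support_ne_nil _), Walk.getLast_support]

theorem ancestors_injective : Function.Injective (hG.ancestors r) := fun x y h => by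
  simpa [getLast?_ancestors] using congrArg List.getLast? h

theorem ancestors_prefix_of_mem (h : c ∈ hG.ancestors r x) :
    hG.ancestors r c <+: hG.ancestors r x := by
  classical
  unfold ancestors at h ⊢
  refine ⟨((hG.rootPath r x).dropUntil c h).support.tail, ?_⟩
  rw [← hG.eq_rootPath ((hG.isPath_rootPath r x).takeUntil h), ← Walk.support_append,
    Walk.take_spec]

theorem mem_ancestors_iff : c ∈ hG.ancestors r x ↔ hG.ancestors r c <+: hG.ancestors r x :=
  ⟨hG.ancestors_prefix_of_mem, fun h => h.subset (Walk.end_mem_support _)⟩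

theorem mem_subtreeSet_iff :
    x ∈ subtreeSet G r v ↔ hG.ancestors r v <+: hG.ancestors r x :=
  hG.onRootPath_iff.trans hG.mem_ancestors_iff

theorem ancestors_of_adj_of_not_mem (hxy : G.Adj x y) (hy : y ∉ hG.ancestors r x) :
    hG.ancestors r y = hG.ancestors r x ++ [y] := by
  rw [ancestors, ← hG.eq_rootPath ((hG.isPath_rootPath r x).concat hy hxy), Walk.support_concat]
  rfl

theorem ancestors_of_adj (hxy : G.Adj x y) :
    hG.ancestors r y = hG.ancestors r x ++ [y] ∨ hG.ancestors r x = hG.ancestors r y ++ [x] := by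
  by_cases hy : y ∈ hG.ancestors r x
  · refine Or.inr (hG.ancestors_of_adj_of_not_mem hxy.symm fun hx => hxy.ne ?_)
    have hxy' := hG.ancestors_prefix_of_mem hx
    have hyx := hG.ancestors_prefix_of_mem hy
    exact (hG.ancestors_injective
      (hyx.eq_of_length (le_antisymm hyx.length_le hxy'.length_le))).symm
  · exact Or.inl (hG.ancestors_of_adj_of_not_mem hxy hy)

theorem isChild_iff :
    IsChild G r a v ↔ G.Adj a v ∧ hG.ancestors r v = hG.ancestors r a ++ [v] := by
  refine and_congr_right fun hav => ⟨fun h => ?_, fun h => ?_⟩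
  · refine (hG.ancestors_of_adj hav).resolve_right fun hva => ?_
    have := (hG.mem_ancestors_iff.1 (hG.onRootPath_iff.1 h)).length_le
    simp [hva] at this
  · rw [hG.onRootPath_iff, h]
    exact List.mem_append_left _ (Walk.end_mem_support _)

end

theorem eq_of_mem_subtreeSet (hG : G.IsTree) (hv : IsChild G r a v) (hw : IsChild G r a w)
    (hxv : x ∈ subtreeSet G r v) (hxw : x ∈ subtreeSet G r w) : v = w := by
  rw [hG.mem_subtreeSet_iff, (hG.isChild_iff.1 hv).2] at hxv
  rw [hG.mem_subtreeSet_iff, (hG.isChild_iff.1 hw).2] at hxw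
  have h := (List.prefix_of_prefix_length_le hxv hxw (by simp)).eq_of_length (by simp)
  simpa using h

/-- The subtrees containing a vertex form a chain. -/
theorem mem_subtreeSet_or_mem_subtreeSet (hG : G.IsTree) (hv : IsChild G r a v)
    (hx : x ∈ subtreeSet G r v) (hb : x ∈ subtreeSet G r b) :
    a ∈ subtreeSet G r b ∨ b ∈ subtreeSet G r v := by
  simp only [hG.mem_subtreeSet_iff, (hG.isChild_iff.1 hv).2] at hx hb ⊢
  rcases List.prefix_or_prefix_of_prefix hb hx with h | h
  · rcases List.prefix_concat_iff.1 h with h | h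
    · exact Or.inr (by rw [h])
    · exact Or.inl h
  · exact Or.inr h

theorem isLCA_of_mem_subtreeSet (hG : G.IsTree) (hv : IsChild G r a v) (hw : IsChild G r a w)
    (hvw : v ≠ w) (hx : x ∈ subtreeSet G r v) (hy : y ∈ subtreeSet G r w) :
    IsLCA G r a x y := by
  refine ⟨hv.2.trans hx, hw.2.trans hy, fun b hbx hby => ?_⟩
  rcases hG.mem_subtreeSet_or_mem_subtreeSet hv hx hbx with h | hbv
  · exact h
  rcases hG.mem_subtreeSet_or_mem_subtreeSet hw hy hby with h | hbw
  · exact h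
  exact absurd (hG.eq_of_mem_subtreeSet hv hw hbv hbw) hvw

theorem mem_subtreeSet_of_adj (hG : G.IsTree) (hv : IsChild G r a v)
    (hx : x ∈ subtreeSet G r v) (hxy : G.Adj x y) (hya : y ≠ a) : y ∈ subtreeSet G r v := by
  rw [hG.mem_subtreeSet_iff] at hx ⊢
  rcases hG.ancestors_of_adj hxy with h | h
  · exact h ▸ hx.trans (List.prefix_append _ _)
  rcases List.prefix_concat_iff.1 (h ▸ hx) with hvx | hvy
  · rw [(hG.isChild_iff.1 hv).2] at hvx
    exact absurd (hG.ancestors_injective (List.append_inj_left' hvx rfl)).symm hya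
  · exact hvy

theorem exists_isChild_mem_subtreeSet (hG : G.IsTree) (hx : x ∈ subtreeSet G r a)
    (hxa : x ≠ a) :
    ∃ c, IsChild G r a c ∧ x ∈ subtreeSet G r c := by
  obtain ⟨_ | ⟨c, t⟩, ht⟩ := hG.mem_subtreeSet_iff.1 hx
  · exact absurd (hG.ancestors_injective (by simpa using ht)).symm hxa
  have hchain : (hG.ancestors r a ++ c :: t).IsChain G.Adj :=
    ht ▸ (hG.rootPath r x).isChain_adj_support
  have hac : G.Adj a c :=
    (List.isChain_append.1 hchain).2.2 a hG.getLast?_ancestors c rfl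
  have hc : hG.ancestors r c = hG.ancestors r a ++ [c] := by
    refine hG.ancestors_of_adj_of_not_mem hac fun hca => ?_
    have hnodup : (hG.ancestors r a ++ c :: t).Nodup :=
      ht ▸ (hG.isPath_rootPath r x).support_nodup
    exact (List.nodup_append.1 hnodup).2.2 c hca c List.mem_cons_self rfl
  refine ⟨c, hG.isChild_iff.2 ⟨hac, hc⟩, hG.mem_subtreeSet_iff.2 ?_⟩
  rw [hc, ← ht]
  exact ⟨t, by simp⟩

end SimpleGraph.IsTree

section AuxiliaryGraph

variable {V : Type*} {G : SimpleGraph V} {r a u v w x : V} {L : Set (Sym2 V)}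

def IsBadChild (G : SimpleGraph V) (r : V) (L : Set (Sym2 V)) (a v : V) : Prop :=
  IsChild G r a v ∧ ¬ IsGoodChild G r L a v

def goodUnion (G : SimpleGraph V) (r : V) (L : Set (Sym2 V)) (a : V) : Set V :=
  ⋃ v ∈ {v : V | IsGoodChild G r L a v}, subtreeSet G r v

open Classical in
/-- The node of the auxiliary graph at `a` containing `x`. Vertices outside `G_a` are sent to
the node of the good children too; this is harmless because a walk avoiding `a` can only leave
`G_a` from the subtree of a good child. -/
noncomputable def auxRegion (G : SimpleGraph V) (r : V) (L : Set (Sym2 V)) (a x : V) : Set V :=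
  if h : ∃ v, IsBadChild G r L a v ∧ x ∈ subtreeSet G r v then subtreeSet G r h.choose
  else goodUnion G r L a

theorem auxRegion_of_isBadChild (hG : G.IsTree) (hv : IsBadChild G r L a v)
    (hx : x ∈ subtreeSet G r v) : auxRegion G r L a x = subtreeSet G r v := by
  have h : ∃ v, IsBadChild G r L a v ∧ x ∈ subtreeSet G r v := ⟨v, hv, hx⟩
  rw [auxRegion, dif_pos h,
    hG.eq_of_mem_subtreeSet h.choose_spec.1.1 hv.1 h.choose_spec.2 hx]

theorem auxRegion_of_isGoodChild (hG : G.IsTree) (hv : IsGoodChild G r L a v)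
    (hx : x ∈ subtreeSet G r v) : auxRegion G r L a x = goodUnion G r L a := by
  refine dif_neg ?_
  rintro ⟨w, hw, hxw⟩
  exact hw.2 (hG.eq_of_mem_subtreeSet hv.1 hw.1 hx hxw ▸ hv)

theorem mem_auxRegion (hG : G.IsTree) (hv : IsChild G r a v) (hx : x ∈ subtreeSet G r v) :
    x ∈ auxRegion G r L a x := by
  by_cases hgood : IsGoodChild G r L a v
  · rw [auxRegion_of_isGoodChild hG hgood hx]
    exact Set.mem_biUnion hgood hx
  · rwa [auxRegion_of_isBadChild hG ⟨hv, hgood⟩ hx]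

theorem auxRegion_mem_auxParts (hG : G.IsTree) (hv : IsChild G r a v)
    (hx : x ∈ subtreeSet G r v) : auxRegion G r L a x ∈ auxParts G r L a := by
  by_cases hgood : IsGoodChild G r L a v
  · rw [auxRegion_of_isGoodChild hG hgood hx]
    exact Or.inr ⟨⟨v, hgood⟩, rfl⟩
  · rw [auxRegion_of_isBadChild hG ⟨hv, hgood⟩ hx]
    exact Or.inl ⟨v, hv, hgood, rfl⟩

theorem exists_auxRegion_eq (hG : G.IsTree) {A : Set V} (hA : A ∈ auxParts G r L a) :
    ∃ x, x ≠ a ∧ auxRegion G r L a x = A := by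
  rcases hA with ⟨v, hv, hbad, rfl⟩ | ⟨⟨v, hv⟩, rfl⟩
  · exact ⟨v, hv.1.ne', auxRegion_of_isBadChild hG ⟨hv, hbad⟩ (mem_subtreeSet_self G r v)⟩
  · exact ⟨v, hv.1.1.ne', auxRegion_of_isGoodChild hG hv (mem_subtreeSet_self G r v)⟩

theorem auxAdj_symm {P : Set (Set V)} {A B : Set V} (h : auxAdj L P A B) : auxAdj L P B A := by
  obtain ⟨hA, hB, hne, x, hx, y, hy, hxy⟩ := h
  exact ⟨hB, hA, hne.symm, y, hy, x, hx, Sym2.eq_swap ▸ hxy⟩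

theorem auxRegion_eq_or_auxAdj_of_isBadChild (hG : G.IsTree) (hv : IsBadChild G r L a v)
    (hu : u ∈ subtreeSet G r v) (hwa : w ≠ a)
    (huw : (fromEdgeSet (G.edgeSet ∪ L)).Adj u w) :
    auxRegion G r L a w = subtreeSet G r v ∨
      auxAdj (lcaLinks G r L a) (auxParts G r L a) (subtreeSet G r v) (auxRegion G r L a w) := by
  by_cases hwv : w ∈ subtreeSet G r v
  · exact Or.inl (auxRegion_of_isBadChild hG hv hwv)
  have hlink : s(u, w) ∈ L := by
    obtain ⟨htree | hlink, -⟩ := (fromEdgeSet_adj _).1 huw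
    · exact absurd (hG.mem_subtreeSet_of_adj hv.1 hu htree hwa) hwv
    · exact hlink
  have hwG : w ∈ subtreeSet G r a := by
    by_contra hout
    exact hv.2 ⟨hv.1, u, hu, w, hout, hlink⟩
  obtain ⟨c, hc, hwc⟩ := hG.exists_isChild_mem_subtreeSet hwG hwa
  have hvc : v ≠ c := by
    rintro rfl
    exact hwv hwc
  have hw : w ∈ auxRegion G r L a w := mem_auxRegion hG hc hwc
  exact Or.inr ⟨Or.inl ⟨v, hv.1, hv.2, rfl⟩, auxRegion_mem_auxParts hG hc hwc,
    fun h => hwv (h ▸ hw), u, hu, w, hw, hlink, u, w, rfl,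
    hG.isLCA_of_mem_subtreeSet hv.1 hc hvc hu hwc⟩

theorem auxRegion_reflTransGen_of_adj (hG : G.IsTree) (hua : u ≠ a) (hwa : w ≠ a)
    (huw : (fromEdgeSet (G.edgeSet ∪ L)).Adj u w) :
    Relation.ReflTransGen (auxAdj (lcaLinks G r L a) (auxParts G r L a))
      (auxRegion G r L a u) (auxRegion G r L a w) := by
  by_cases hub : ∃ v, IsBadChild G r L a v ∧ u ∈ subtreeSet G r v
  · obtain ⟨v, hv, huv⟩ := hub
    rw [auxRegion_of_isBadChild hG hv huv]
    rcases auxRegion_eq_or_auxAdj_of_isBadChild hG hv huv hwa huw with h | h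
    · rw [h]
    · exact .single h
  by_cases hwb : ∃ v, IsBadChild G r L a v ∧ w ∈ subtreeSet G r v
  · obtain ⟨v, hv, hwv⟩ := hwb
    rw [auxRegion_of_isBadChild hG hv hwv]
    rcases auxRegion_eq_or_auxAdj_of_isBadChild hG hv hwv hua huw.symm with h | h
    · rw [h]
    · exact .single (auxAdj_symm h)
  rw [auxRegion, auxRegion, dif_neg hub, dif_neg hwb]

end AuxiliaryGraph

theorem stmt10_general {V : Type*} (G : SimpleGraph V) (r : V) (hG : G.IsTree)
    (OPT : Set (Sym2 V))
    (hOPT : TwoVertexConnected (SimpleGraph.fromEdgeSet (G.edgeSet ∪ OPT)))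
    (a : V) :
    auxConnected (lcaLinks G r OPT a) (auxParts G r OPT a) := by
  intro A hA B hB
  obtain ⟨x, hxa, rfl⟩ := exists_auxRegion_eq hG hA
  obtain ⟨y, hya, rfl⟩ := exists_auxRegion_eq hG hB
  have hxy := (hOPT.2 a).preconnected ⟨x, hxa⟩ ⟨y, hya⟩
  rw [reachable_iff_reflTransGen] at hxy
  exact hxy.lift' (fun u : ({a}ᶜ : Set V) => auxRegion G r OPT a u)
    fun u w huw => auxRegion_reflTransGen_of_adj hG u.2 w.2 huw

/-- If `OPT` augments the tree `G` to a 2-vertex-connected graph then, for every vertex `a`,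
the auxiliary graph at `a` (bad-child subtrees plus the union of good-child subtrees) is
connected using only the links of `E*(a) = {{u,v} ∈ OPT : LCA(u,v) = a}`; in particular
`E*(a)` contains a spanning tree of it. -/
theorem stmt10 {V : Type*} [Fintype V] (G : SimpleGraph V) (r : V) (hG : G.IsTree)
    (h3 : 3 ≤ Fintype.card V)
    (OPT : Set (Sym2 V))
    (hOPT : TwoVertexConnected (SimpleGraph.fromEdgeSet (G.edgeSet ∪ OPT)))
    (a : V) :
    auxConnected (lcaLinks G r OPT a) (auxParts G r OPT a) :=
  stmt10_general G r hG OPT hOPT a
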